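/- arXiv:2401.04264 — 4 statements merged into one kernel-verified Lean document; each statement's English description precedes it below -/
import Mathlib

section
/- Let I be a finite battlefield set with |I| = K and suppose player p wins every battlefield (π_j + δ_p > φ_j for all j ∈ I). Then for every i ∈ I, φ_i ≥ N' - N + π_i + (K-1)(1-δ_p), where N = ∑_{j} π_j and N' = ∑_{j} φ_j. -/
/-- If player p wins every battlefield, then for every i,
    φ_i ≥ N' - N + π_i + (K-1)(1-δ_p), over ℤ. -/
theorem win_alt_lower_bound {ι : Type*} [Fintype ι]
    (π φ : ι → ℕ) (δ : ℕ) (hδ : δ = 0 ∨ δ = 1)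
    (K : ℕ) (hK : Fintype.card ι = K)
    (N N' : ℕ) (hN : N = ∑ j, π j) (hN' : N' = ∑ j, φ j)
    (hWin : ∀ j, π j + δ > φ j) :
    ∀ i, (φ i : ℤ) ≥ (N' : ℤ) - N + π i + ((K : ℤ) - 1) * (1 - δ) := by
  subst hN hN' hK
  intro i
  classical
  have key : ∀ j ∈ Finset.univ.erase i, (φ j : ℤ) + (1 - δ) ≤ π j := by
    intro j _
    have := hWin j
    push_cast
    omega
  have hsum := Finset.sum_le_sum key
  rw [Finset.sum_add_distrib, Finset.sum_const, nsmul_eq_mul,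
    Finset.card_erase_of_mem (Finset.mem_univ i)] at hsum
  have h1 : ∑ j ∈ Finset.univ.erase i, (π j : ℤ) = (∑ j, (π j : ℤ)) - π i :=
    Finset.sum_erase_eq_sub (Finset.mem_univ i)
  have h2 : ∑ j ∈ Finset.univ.erase i, (φ j : ℤ) = (∑ j, (φ j : ℤ)) - φ i :=
    Finset.sum_erase_eq_sub (Finset.mem_univ i)
  have hcard : 1 ≤ Fintype.card ι := Fintype.card_pos_iff.mpr ⟨i⟩
  have hc : (((Finset.univ (α := ι)).card - 1 : ℕ) : ℤ) = (Fintype.card ι : ℤ) - 1 := by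
    simp [Finset.card_univ]; omega
  rw [h1, h2, hc] at hsum
  push_cast
  linarith
end

section
/- Greedy optimality of Max Payoff in Colonel Blotto: let φ : I → ℕ be the opponent's allocations over K battlefields and let the player have N resources and draw bias δ_p ∈ {0,1}. The maximum number of battlefields the player can win with an allocation π : I → ℕ satisfying ∑π_i ≤ N equals the largest m such that the sum of the m smallest values of (φ_i + 1 - δ_p) over i ∈ I is at most N. -/
/-- Greedy optimality of Max Payoff: the maximum number of battlefields winnable
    with budget N equals the largest m for which some m battlefields have total
    cost ∑ (φ_i + 1 - δ_p) at most N (i.e., the m smallest costs fit in N). -/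
theorem max_payoff_greedy {ι : Type*} [Fintype ι] [DecidableEq ι]
    (φ : ι → ℕ) (N δ : ℕ) (hδ : δ = 0 ∨ δ = 1) :
    sSup {L : ℕ | ∃ π : ι → ℕ, (∑ i, π i) ≤ N ∧
        (Finset.univ.filter (fun i => π i + δ > φ i)).card = L} =
      sSup {m : ℕ | ∃ S : Finset ι, S.card = m ∧ (∑ i ∈ S, (φ i + 1 - δ)) ≤ N} := by
  have hδ1 : δ ≤ 1 := by omega
  have bddR : ∀ m ∈ {m : ℕ | ∃ S : Finset ι, S.card = m ∧ (∑ i ∈ S, (φ i + 1 - δ)) ≤ N},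
      m ≤ Fintype.card ι := by
    rintro m ⟨S, hS, -⟩; exact hS ▸ S.card_le_univ
  have bddL : ∀ L ∈ {L : ℕ | ∃ π : ι → ℕ, (∑ i, π i) ≤ N ∧
      (Finset.univ.filter (fun i => π i + δ > φ i)).card = L}, L ≤ Fintype.card ι := by
    rintro L ⟨π, -, hL⟩; rw [← hL]; exact Finset.card_le_univ _
  apply le_antisymm
  · refine csSup_le ⟨_, ⟨fun _ => 0, by simp, rfl⟩⟩ ?_
    rintro L ⟨π, hπ, hL⟩
    apply le_csSup ⟨Fintype.card ι, bddR⟩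
    refine ⟨Finset.univ.filter (fun i => π i + δ > φ i), hL, ?_⟩
    calc ∑ i ∈ Finset.univ.filter (fun i => π i + δ > φ i), (φ i + 1 - δ)
        ≤ ∑ i ∈ Finset.univ.filter (fun i => π i + δ > φ i), π i :=
          Finset.sum_le_sum (fun i hi => by
            simp only [Finset.mem_filter] at hi; omega)
      _ ≤ ∑ i, π i := Finset.sum_le_sum_of_subset (Finset.filter_subset _ _)
      _ ≤ N := hπ
  · refine csSup_le ⟨0, ⟨∅, by simp, by simp⟩⟩ ?_
    rintro m ⟨S, hS, hsum⟩
    set π : ι → ℕ := fun i => if i ∈ S then φ i + 1 - δ else 0 with hπdef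
    have hwin : m ≤ (Finset.univ.filter (fun i => π i + δ > φ i)).card := by
      rw [← hS]
      apply Finset.card_le_card
      intro i hi
      simp only [Finset.mem_filter, Finset.mem_univ, true_and, hπdef]
      rw [if_pos hi]; omega
    refine le_trans hwin (le_csSup ⟨Fintype.card ι, bddL⟩ ?_)
    refine ⟨π, ?_, rfl⟩
    have : (∑ i, π i) = ∑ i ∈ S, (φ i + 1 - δ) := by
      rw [hπdef, Finset.sum_ite_mem, Finset.univ_inter]
    omega
end

section
/- Combined tight lower bound: for a battlefield i with Λ ∈ {∅, {i}} (player p loses at most battlefield i and wins all others), φ_i ≥ N' - N + π_i - δ_p·1_Λ(i) + (K-1)(1-δ_p), where 1_Λ(i) = 1 if i ∈ Λ and 0 otherwise. -/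
/-- Combined tight lower bound: if the loss set Λ is ∅ or {i}, then
    φ_i ≥ N' - N + π_i - δ_p·1_Λ(i) + (K-1)(1-δ_p). -/
theorem combined_tight_lower_bound {ι : Type*} [Fintype ι] [DecidableEq ι]
    (π φ : ι → ℕ) (δ : ℕ) (hδ : δ = 0 ∨ δ = 1)
    (K : ℕ) (hK : Fintype.card ι = K)
    (N N' : ℕ) (hN : N = ∑ j, π j) (hN' : N' = ∑ j, φ j)
    (i : ι)
    (hΛ : Finset.univ.filter (fun j => π j + δ ≤ φ j) = ∅ ∨
          Finset.univ.filter (fun j => π j + δ ≤ φ j) = {i}) :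
    (φ i : ℤ) ≥ (N' : ℤ) - N + π i
        - δ * (if i ∈ Finset.univ.filter (fun j => π j + δ ≤ φ j) then 1 else 0)
        + ((K : ℤ) - 1) * (1 - δ) := by
  -- For every j ≠ i, player p wins j: φ j + 1 ≤ π j + δ
  have key : ∀ j ∈ Finset.univ.erase i, (φ j : ℤ) ≤ (π j : ℤ) + δ - 1 := by
    intro j hj
    have hji : j ≠ i := (Finset.mem_erase.mp hj).1
    have hnot : ¬ (π j + δ ≤ φ j) := by
      intro h
      have hmem : j ∈ Finset.univ.filter (fun j => π j + δ ≤ φ j) := by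
        simp [Finset.mem_filter, h]
      rcases hΛ with hE | hS
      · rw [hE] at hmem; exact absurd hmem (Finset.notMem_empty j)
      · rw [hS, Finset.mem_singleton] at hmem; exact hji hmem
    have : φ j + 1 ≤ π j + δ := Nat.lt_of_not_le hnot
    have := (Nat.cast_le (α := ℤ)).mpr this
    push_cast at this
    linarith
  have hsum : ∑ j ∈ Finset.univ.erase i, (φ j : ℤ) ≤
      ∑ j ∈ Finset.univ.erase i, ((π j : ℤ) + δ - 1) :=
    Finset.sum_le_sum key
  have hcard : (Finset.univ.erase i).card = K - 1 := by
    rw [Finset.card_erase_of_mem (Finset.mem_univ i), Finset.card_univ, hK]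
  have hK1 : 1 ≤ K := by
    have : 0 < Fintype.card ι := Fintype.card_pos_iff.mpr ⟨i⟩
    omega
  have hcardZ : ((Finset.univ.erase i).card : ℤ) = (K : ℤ) - 1 := by
    rw [hcard]; push_cast [hK1]; ring
  have hsplitφ : (N' : ℤ) = (φ i : ℤ) + ∑ j ∈ Finset.univ.erase i, (φ j : ℤ) := by
    rw [hN']
    push_cast
    exact (Finset.add_sum_erase _ _ (Finset.mem_univ i)).symm
  have hsplitπ : ∑ j ∈ Finset.univ.erase i, (π j : ℤ) = (N : ℤ) - π i := by
    rw [hN]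
    push_cast
    rw [← Finset.add_sum_erase _ (fun j => (π j : ℤ)) (Finset.mem_univ i)]
    ring
  have hrhs : ∑ j ∈ Finset.univ.erase i, ((π j : ℤ) + δ - 1)
      = (N : ℤ) - π i + ((K : ℤ) - 1) * ((δ : ℤ) - 1) := by
    rw [Finset.sum_sub_distrib, Finset.sum_add_distrib, hsplitπ, Finset.sum_const,
      Finset.sum_const, nsmul_eq_mul, nsmul_eq_mul, hcardZ]
    ring
  have hmain : (φ i : ℤ) ≥ (N' : ℤ) - N + π i + ((K : ℤ) - 1) * (1 - δ) := by
    rw [hrhs] at hsum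
    linarith [hsplitφ]
  have hind : (0 : ℤ) ≤ δ * (if i ∈ Finset.univ.filter (fun j => π j + δ ≤ φ j) then 1 else 0) := by
    positivity
  linarith
end

section
/- If player p wins battlefield i and N' + 1 < ∑_{λ ∈ Λ ∪ {i}}(π_λ + δ_p), then the allocation φ_i satisfies φ_i ≤ N' - ∑_{λ∈Λ}(π_λ + δ_p) < π_i + δ_p - 1; that is, the refined upper bound is both valid and strictly tighter than the basic win bound. -/
/-- If player p wins battlefield i and N' + 1 < ∑_{λ∈Λ∪{i}}(π_λ+δ_p), then the
    refined upper bound is valid and strictly tighter than the basic win bound: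
    φ_i ≤ N' - ∑_{λ∈Λ}(π_λ+δ_p) < π_i + δ_p - 1. -/
theorem refined_upper_bound_valid_and_tighter {ι : Type*} [Fintype ι] [DecidableEq ι]
    (π φ : ι → ℕ) (δ : ℕ) (hδ : δ = 0 ∨ δ = 1)
    (N' : ℕ) (hN' : N' = ∑ j, φ j)
    (i : ι) (hwin : π i + δ > φ i)
    (hcond : (N' : ℤ) + 1 <
        ∑ l ∈ insert i (Finset.univ.filter (fun j => π j + δ ≤ φ j)),
          ((π l : ℤ) + δ)) :
    (φ i : ℤ) ≤ (N' : ℤ) - ∑ l ∈ Finset.univ.filter (fun j => π j + δ ≤ φ j),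
        ((π l : ℤ) + δ) ∧
      (N' : ℤ) - ∑ l ∈ Finset.univ.filter (fun j => π j + δ ≤ φ j),
        ((π l : ℤ) + δ) < (π i : ℤ) + δ - 1 := by
  set Λ := Finset.univ.filter (fun j => π j + δ ≤ φ j) with hΛ
  have hiΛ : i ∉ Λ := by
    simp only [hΛ, Finset.mem_filter]
    omega
  rw [Finset.sum_insert hiΛ] at hcond
  constructor
  · have h1 : ∑ l ∈ Λ, ((π l : ℤ) + δ) ≤ ∑ l ∈ Λ, (φ l : ℤ) := by
      apply Finset.sum_le_sum
      intro l hl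
      simp only [hΛ, Finset.mem_filter] at hl
      exact_mod_cast hl.2
    have h2 : (φ i : ℤ) + ∑ l ∈ Λ, (φ l : ℤ) ≤ (N' : ℤ) := by
      rw [hN']
      push_cast
      have h3 : ∑ l ∈ insert i Λ, (φ l : ℤ) ≤ ∑ l : ι, (φ l : ℤ) :=
        Finset.sum_le_sum_of_subset_of_nonneg (Finset.subset_univ _)
          (fun _ _ _ => by positivity)
      rw [Finset.sum_insert hiΛ] at h3
      exact h3
    linarith
  · linarith
end
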